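/- arXiv:1804.09788 — 4 statements merged into one kernel-verified Lean document; each statement's English description precedes it below -/
import Mathlib

section
/- If a dictionary D has spark σ(D) (the smallest number of linearly dependent columns), and a vector γ satisfies x = Dγ with ‖γ‖₀ < σ(D)/2, then γ is the unique sparsest representation of x: any γ' with Dγ' = x and γ' ≠ γ satisfies ‖γ'‖₀ > ‖γ‖₀. -/
/-!
If `D γ' = D γ` with `γ' ≠ γ`, the support of `γ' - γ` indexes linearly dependent columns of `D`,
so `σ(D) ≤ ‖γ' - γ‖₀ ≤ ‖γ'‖₀ + ‖γ‖₀`; together with `2 ‖γ‖₀ < σ(D)` this forces `‖γ‖₀ < ‖γ'‖₀`.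
-/

/-- The spark of a matrix: the smallest number of linearly dependent columns. -/
noncomputable def spark {n m : ℕ} (D : Matrix (Fin n) (Fin m) ℝ) : ℕ :=
  sInf {k | ∃ s : Finset (Fin m), s.card = k ∧
    ¬ LinearIndependent ℝ (fun j : {x // x ∈ s} => fun i => D i j.1)}

/-- The ℓ₀ "norm": number of nonzero entries. -/
noncomputable def l0 {m : ℕ} (γ : Fin m → ℝ) : ℕ := {i | γ i ≠ 0}.ncard

open Finset Matrix

lemma l0_sub_le {m : ℕ} (γ' γ : Fin m → ℝ) : l0 (γ' - γ) ≤ l0 γ' + l0 γ :=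
  (Set.ncard_le_ncard (Function.support_sub γ' γ)).trans (Set.ncard_union_le _ _)

lemma l0_eq_card_filter {m : ℕ} (δ : Fin m → ℝ) : l0 δ = #{j | δ j ≠ 0} := by
  rw [l0, ← Set.ncard_coe_finset, coe_filter]
  simp only [mem_univ, true_and]

lemma not_linearIndependent_cols_of_mulVec_eq_zero {n m : ℕ} (D : Matrix (Fin n) (Fin m) ℝ)
    {δ : Fin m → ℝ} (hDδ : D *ᵥ δ = 0) (hδ : δ ≠ 0) :
    ¬ LinearIndependent ℝ
      (fun j : {x // x ∈ ({j | δ j ≠ 0} : Finset (Fin m))} => fun i => D i j.1) := by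
  rw [Fintype.linearIndependent_iff]
  push Not
  refine ⟨fun j => δ j, ?_, ?_⟩
  · ext i
    have hrow : ∑ j, δ j * D i j = 0 := by
      simpa [mulVec, dotProduct, mul_comm] using congrFun hDδ i
    have hsupp : ∑ j ∈ {j | δ j ≠ 0}, δ j * D i j = ∑ j, δ j * D i j :=
      sum_filter_of_ne fun j _ h => left_ne_zero_of_mul h
    simp only [Finset.sum_apply, Pi.smul_apply, smul_eq_mul, Pi.zero_apply]
    rw [sum_coe_sort _ (fun j => δ j * D i j), hsupp, hrow]
  · obtain ⟨j, hj⟩ := Function.ne_iff.mp hδ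
    exact ⟨⟨j, by simpa using hj⟩, hj⟩

lemma spark_le_l0_of_mulVec_eq_zero {n m : ℕ} (D : Matrix (Fin n) (Fin m) ℝ)
    {δ : Fin m → ℝ} (hDδ : D *ᵥ δ = 0) (hδ : δ ≠ 0) : spark D ≤ l0 δ :=
  Nat.sInf_le ⟨_, (l0_eq_card_filter δ).symm, not_linearIndependent_cols_of_mulVec_eq_zero D hDδ hδ⟩

/-- If x = Dγ with ‖γ‖₀ < spark(D)/2, then γ is the unique sparsest
representation of x. -/
theorem stmt0 {n m : ℕ} (D : Matrix (Fin n) (Fin m) ℝ) (γ : Fin m → ℝ)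
    (hγ : 2 * l0 γ < spark D) :
    ∀ γ' : Fin m → ℝ, D.mulVec γ' = D.mulVec γ → γ' ≠ γ → l0 γ < l0 γ' := by
  intro γ' hx hne
  have hspark : spark D ≤ l0 (γ' - γ) :=
    spark_le_l0_of_mulVec_eq_zero D (by rw [mulVec_sub, hx, sub_self]) (sub_ne_zero.mpr hne)
  have hsub := l0_sub_le γ' γ
  omega
end

section
/- For any matrix D ∈ ℝ^{n×m} with nonzero columns, the spark satisfies σ(D) ≥ 1 + 1/μ(D), where μ(D) is the mutual coherence, i.e., the maximum over i≠j of |dᵢᵀdⱼ|/(‖dᵢ‖₂‖dⱼ‖₂). -/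
/-- The mutual coherence: maximal normalized correlation between distinct columns. -/
noncomputable def mutualCoherence {n m : ℕ} (D : Matrix (Fin n) (Fin m) ℝ) : ℝ :=
  sSup {x | ∃ i j : Fin m, i ≠ j ∧
    x = |∑ t, D t i * D t j| /
      (Real.sqrt (∑ t, D t i ^ 2) * Real.sqrt (∑ t, D t j ^ 2))}

/-!
Take a minimal dependent set of `k = σ(D)` columns and a vanishing combination `∑ g j • d j = 0`,
and let `i` maximise `|g i| ‖d i‖`. Pairing the combination with `d i` gives
`|g i| ‖d i‖² ≤ ∑_{j ≠ i} |g j| |⟪d i, d j⟫| ≤ (k - 1) μ ‖d i‖ (|g i| ‖d i‖)`, i.e. `1 ≤ μ (k - 1)`.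
-/

open Finset WithLp

open scoped RealInnerProductSpace

section Coherence

variable {ι E : Type*} [Fintype ι] [NormedAddCommGroup E] [InnerProductSpace ℝ E]

lemma abs_mul_norm_sq_le_sum_abs_mul_abs_inner [DecidableEq ι] {v : ι → E} {g : ι → ℝ}
    (hg : ∑ j, g j • v j = 0) (i : ι) :
    |g i| * ‖v i‖ ^ 2 ≤ ∑ j ∈ univ.erase i, |g j| * |⟪v i, v j⟫| := by
  have hpair : ∑ j, g j * ⟪v i, v j⟫ = 0 := by
    simpa [inner_sum, inner_smul_right] using congrArg (⟪v i, ·⟫) hg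
  rw [← add_sum_erase _ _ (mem_univ i), real_inner_self_eq_norm_sq] at hpair
  calc |g i| * ‖v i‖ ^ 2 = |g i * ‖v i‖ ^ 2| := by rw [abs_mul, abs_sq]
    _ = |∑ j ∈ univ.erase i, g j * ⟪v i, v j⟫| := by
      rw [eq_neg_of_add_eq_zero_left hpair, abs_neg]
    _ ≤ ∑ j ∈ univ.erase i, |g j * ⟪v i, v j⟫| := abs_sum_le_sum_abs _ _
    _ = ∑ j ∈ univ.erase i, |g j| * |⟪v i, v j⟫| := by simp only [abs_mul]

theorem one_le_mul_card_sub_one_of_not_linearIndependent {v : ι → E} (hv : ∀ i, v i ≠ 0)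
    (hdep : ¬ LinearIndependent ℝ v) {μ : ℝ} (hμ : 0 ≤ μ)
    (hcoh : ∀ i j, i ≠ j → |⟪v i, v j⟫| ≤ μ * (‖v i‖ * ‖v j‖)) :
    1 ≤ μ * (Fintype.card ι - 1) := by
  classical
  obtain ⟨g, hg, i₀, hi₀⟩ := Fintype.not_linearIndependent_iff.mp hdep
  have : Nonempty ι := ⟨i₀⟩
  obtain ⟨i, hmax⟩ := Finite.exists_max fun j => |g j| * ‖v j‖
  set a := |g i| * ‖v i‖
  have ha : 0 < a := (mul_pos (abs_pos.2 hi₀) (norm_pos_iff.2 (hv i₀))).trans_le (hmax i₀)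
  have hvi : 0 < ‖v i‖ := norm_pos_iff.2 (hv i)
  have key : 1 * (a * ‖v i‖) ≤ μ * (Fintype.card ι - 1) * (a * ‖v i‖) :=
    calc 1 * (a * ‖v i‖) = |g i| * ‖v i‖ ^ 2 := by ring
      _ ≤ ∑ j ∈ univ.erase i, |g j| * |⟪v i, v j⟫| :=
        abs_mul_norm_sq_le_sum_abs_mul_abs_inner hg i
      _ ≤ ∑ _j ∈ univ.erase i, μ * ‖v i‖ * a := by
        refine sum_le_sum fun j hj => ?_
        calc |g j| * |⟪v i, v j⟫| ≤ |g j| * (μ * (‖v i‖ * ‖v j‖)) :=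
              mul_le_mul_of_nonneg_left (hcoh i j (ne_of_mem_erase hj).symm) (abs_nonneg _)
          _ = μ * ‖v i‖ * (|g j| * ‖v j‖) := by ring
          _ ≤ μ * ‖v i‖ * a := mul_le_mul_of_nonneg_left (hmax j) (by positivity)
      _ = μ * (Fintype.card ι - 1) * (a * ‖v i‖) := by
        rw [sum_const, card_erase_of_mem (mem_univ i), card_univ, nsmul_eq_mul,
          Nat.cast_sub Fintype.card_pos]
        push_cast
        ring
  exact le_of_mul_le_mul_right key (mul_pos ha hvi)

end Coherence

section Matrix

variable {n m : ℕ} (D : Matrix (Fin n) (Fin m) ℝ)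

noncomputable def euclideanColumn (j : Fin m) : EuclideanSpace ℝ (Fin n) :=
  toLp 2 fun i => D i j

lemma inner_euclideanColumn (i j : Fin m) :
    ⟪euclideanColumn D i, euclideanColumn D j⟫ = ∑ t, D t i * D t j := by
  simp only [euclideanColumn, EuclideanSpace.inner_toLp_toLp, dotProduct, star_trivial, mul_comm]

lemma norm_euclideanColumn (j : Fin m) :
    ‖euclideanColumn D j‖ = √(∑ t, D t j ^ 2) := by
  simp only [EuclideanSpace.norm_eq, euclideanColumn, Real.norm_eq_abs, sq_abs]

lemma abs_inner_euclideanColumn_le {i j : Fin m} (hij : i ≠ j) :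
    |⟪euclideanColumn D i, euclideanColumn D j⟫| ≤
      mutualCoherence D * (‖euclideanColumn D i‖ * ‖euclideanColumn D j‖) := by
  rcases (mul_nonneg (norm_nonneg (euclideanColumn D i))
    (norm_nonneg (euclideanColumn D j))).eq_or_lt with hzero | hpos
  · rcases mul_eq_zero.1 hzero.symm with h | h <;> simp [norm_eq_zero.1 h]
  have hbdd : BddAbove {x | ∃ i j : Fin m, i ≠ j ∧ x = |∑ t, D t i * D t j| /
      (√(∑ t, D t i ^ 2) * √(∑ t, D t j ^ 2))} :=
    ((Set.finite_range fun p : Fin m × Fin m => |∑ t, D t p.1 * D t p.2| /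
      (√(∑ t, D t p.1 ^ 2) * √(∑ t, D t p.2 ^ 2))).subset
        (by rintro x ⟨i, j, -, rfl⟩; exact ⟨(i, j), rfl⟩)).bddAbove
  rw [← div_le_iff₀ hpos, inner_euclideanColumn, norm_euclideanColumn, norm_euclideanColumn]
  exact le_csSup hbdd ⟨i, j, hij, rfl⟩

lemma exists_card_eq_spark
    (hdep : ∃ s : Finset (Fin m),
      ¬ LinearIndependent ℝ (fun j : {x // x ∈ s} => fun i => D i j.1)) :
    ∃ s : Finset (Fin m), s.card = spark D ∧
      ¬ LinearIndependent ℝ (fun j : {x // x ∈ s} => fun i => D i j.1) := by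
  obtain ⟨s, hs⟩ := hdep
  exact Nat.sInf_mem (s := {k | ∃ s : Finset (Fin m), s.card = k ∧
    ¬ LinearIndependent ℝ (fun j : {x // x ∈ s} => fun i => D i j.1)}) ⟨s.card, s, rfl, hs⟩

end Matrix

/-- The spark is lower bounded via the mutual coherence: σ(D) ≥ 1 + 1/μ(D). -/
theorem stmt1 {n m : ℕ} (D : Matrix (Fin n) (Fin m) ℝ)
    (hcols : ∀ j : Fin m, (fun i => D i j) ≠ 0)
    (hdep : ∃ s : Finset (Fin m),
      ¬ LinearIndependent ℝ (fun j : {x // x ∈ s} => fun i => D i j.1))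
    (hμ : 0 < mutualCoherence D) :
    1 + 1 / mutualCoherence D ≤ (spark D : ℝ) := by
  obtain ⟨s, hcard, hs⟩ := exists_card_eq_spark D hdep
  have hcols' (j : s) : euclideanColumn D j ≠ 0 := by
    simpa [euclideanColumn] using hcols j
  have hdep' : ¬ LinearIndependent ℝ fun j : s => euclideanColumn D j := fun hli =>
    hs (hli.map' (WithLp.linearEquiv 2 ℝ (Fin n → ℝ)).toLinearMap (LinearEquiv.ker _))
  have h := one_le_mul_card_sub_one_of_not_linearIndependent hcols' hdep' hμ.le
    fun i j hij => abs_inner_euclideanColumn_le D (Subtype.coe_injective.ne hij)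
  rw [Fintype.card_coe, hcard] at h
  have : 1 / mutualCoherence D ≤ spark D - 1 := by
    rw [div_le_iff₀ hμ]
    linarith
  linarith
end

section
/- Let A ∈ ℝ^{p×n} have unit-norm rows a₁,…,a_p with pairwise inner products |aᵢᵀaⱼ| ≤ μ for i ≠ j. Then for any e ∈ ℝⁿ, min over i of |aᵢᵀe| ≤ ‖e‖₂ · (1 + μ(p−1))/√p. -/
/-!
Put `c = A e` and let `G = A Aᵀ` be the Gram matrix of the rows. Since `G` has unit diagonal and
off-diagonal entries bounded by `μ`, its quadratic form is at most `1 + μ (p - 1)` times `‖c‖²`.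
As `‖c‖² = ⟪Aᵀ c, e⟫ ≤ ‖Aᵀ c‖ ‖e‖` and `‖Aᵀ c‖² = cᵀ G c`, this gives
`‖A e‖² ≤ (1 + μ (p - 1)) ‖e‖²`; finally the smallest of the `p` squares `cᵢ²` is at most their mean.
-/

open Matrix Finset

variable {m n : Type*} [Fintype m] [Fintype n]

theorem dotProduct_mulVec_le_of_abs_offDiag_le (G : Matrix m m ℝ) {d μ : ℝ} (hμ : 0 ≤ μ)
    (hdiag : ∀ i, G i i ≤ d) (hoff : ∀ i j, i ≠ j → |G i j| ≤ μ) (c : m → ℝ) :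
    c ⬝ᵥ (G *ᵥ c) ≤ (d + μ * (Fintype.card m - 1)) * ∑ i, c i ^ 2 := by
  classical
  -- Split off the diagonal as `μ cᵢ² + (Gᵢᵢ - μ) cᵢ²` so that every entry contributes `μ |cᵢ| |cⱼ|`.
  have hterm : ∀ i j, c i * (G i j * c j) ≤
      μ * (|c i| * |c j|) + if i = j then (d - μ) * c i ^ 2 else 0 := by
    intro i j
    by_cases hij : i = j
    · subst hij
      have : |c i| * |c i| = c i ^ 2 := by rw [← abs_mul, abs_mul_self, sq]
      simp only [if_true]
      nlinarith [hdiag i, sq_nonneg (c i)]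
    · simp only [hij, if_false, add_zero]
      calc c i * (G i j * c j) ≤ |c i| * (|G i j| * |c j|) := by
            rw [← abs_mul, ← abs_mul]; exact le_abs_self _
        _ ≤ |c i| * (μ * |c j|) := by gcongr; exact hoff i j hij
        _ = μ * (|c i| * |c j|) := by ring
  have habs : (∑ i, |c i|) ^ 2 ≤ Fintype.card m * ∑ i, c i ^ 2 := by
    simpa only [sq_abs, card_univ] using sq_sum_le_card_mul_sum_sq (s := univ) (f := fun i => |c i|)
  calc c ⬝ᵥ (G *ᵥ c) = ∑ i, ∑ j, c i * (G i j * c j) := by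
        simp only [dotProduct, mulVec, mul_sum]
    _ ≤ ∑ i, ∑ j, (μ * (|c i| * |c j|) + if i = j then (d - μ) * c i ^ 2 else 0) :=
        sum_le_sum fun i _ => sum_le_sum fun j _ => hterm i j
    _ = μ * (∑ i, |c i|) ^ 2 + (d - μ) * ∑ i, c i ^ 2 := by
        rw [sq, sum_mul_sum, mul_sum]
        simp only [sum_add_distrib, sum_ite_eq, mem_univ, if_true, mul_sum]
    _ ≤ μ * (Fintype.card m * ∑ i, c i ^ 2) + (d - μ) * ∑ i, c i ^ 2 := by gcongr
    _ = (d + μ * (Fintype.card m - 1)) * ∑ i, c i ^ 2 := by ring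

theorem sum_mulVec_sq_le_of_gram_le (A : Matrix m n ℝ) {K : ℝ} (hK : 0 ≤ K)
    (hgram : ∀ c, c ⬝ᵥ ((A * Aᵀ) *ᵥ c) ≤ K * ∑ i, c i ^ 2) (e : n → ℝ) :
    ∑ i, (A *ᵥ e) i ^ 2 ≤ K * ∑ t, e t ^ 2 := by
  set c := A *ᵥ e
  set S := ∑ i, c i ^ 2
  have hS : S = (c ᵥ* A) ⬝ᵥ e := by
    rw [← dotProduct_mulVec]; simp only [S, c, dotProduct, sq]
  have hAc : ∑ t, (c ᵥ* A) t ^ 2 ≤ K * S := by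
    calc ∑ t, (c ᵥ* A) t ^ 2 = c ⬝ᵥ ((A * Aᵀ) *ᵥ c) := by
          rw [← mulVec_mulVec, dotProduct_mulVec, mulVec_transpose]; simp only [dotProduct, sq]
      _ ≤ K * S := hgram c
  have hCS : S ^ 2 ≤ K * S * ∑ t, e t ^ 2 := by
    calc S ^ 2 ≤ (∑ t, (c ᵥ* A) t ^ 2) * ∑ t, e t ^ 2 := by
          rw [hS]; exact sum_mul_sq_le_sq_mul_sq univ _ _
      _ ≤ K * S * ∑ t, e t ^ 2 := by gcongr
  have hS0 : 0 ≤ S := by positivity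
  rcases hS0.eq_or_lt with hS_eq | hS_pos
  · rw [← hS_eq]; positivity
  · nlinarith

theorem exists_abs_le_sqrt_sum_sq_div_sqrt_card [Nonempty m] (c : m → ℝ) :
    ∃ i, |c i| ≤ √(∑ j, c j ^ 2) / √(Fintype.card m) := by
  obtain ⟨i, -, hi⟩ := exists_le_of_sum_le (s := univ) univ_nonempty
    (f := fun i => c i ^ 2) (g := fun _ => (∑ j, c j ^ 2) / Fintype.card m) (by
      rw [sum_const, card_univ, nsmul_eq_mul, mul_div_cancel₀ _ (by positivity)])
  refine ⟨i, ?_⟩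
  rw [← Real.sqrt_sq_eq_abs, ← Real.sqrt_div' _ (by positivity)]
  exact Real.sqrt_le_sqrt hi

/-- Co-support detection bound: for p unit-norm rows with pairwise coherence at
most μ, the minimal |correlation| with any vector e is at most
‖e‖₂(1 + μ(p−1))/√p. -/
theorem stmt14 {p n : ℕ} (hp : 0 < p) (A : Matrix (Fin p) (Fin n) ℝ)
    (hrows : ∀ i, ∑ t, (A i t) ^ 2 = 1) (μ : ℝ) (hμ : 0 ≤ μ)
    (hcoh : ∀ i j : Fin p, i ≠ j → |∑ t, A i t * A j t| ≤ μ)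
    (e : Fin n → ℝ) :
    ∃ i : Fin p, |A.mulVec e i| ≤
      Real.sqrt (∑ t, (e t) ^ 2) * (1 + μ * ((p : ℝ) - 1)) / Real.sqrt p := by
  set K := 1 + μ * ((p : ℝ) - 1)
  have hK : 1 ≤ K := by
    have : (1 : ℝ) ≤ p := by exact_mod_cast hp
    simp only [K, le_add_iff_nonneg_right]
    positivity
  have hgram_entry : ∀ i j, (A * Aᵀ) i j = ∑ t, A i t * A j t := fun i j => by
    simp only [mul_apply, transpose_apply]
  have hgram : ∀ c, c ⬝ᵥ ((A * Aᵀ) *ᵥ c) ≤ K * ∑ i, c i ^ 2 := by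
    simpa only [Fintype.card_fin] using dotProduct_mulVec_le_of_abs_offDiag_le (A * Aᵀ) hμ
      (fun i => by simp only [hgram_entry, ← sq, hrows, le_refl])
      (fun i j hij => by simpa only [hgram_entry] using hcoh i j hij)
  have hAe := sum_mulVec_sq_le_of_gram_le A (by positivity) hgram e
  have : Nonempty (Fin p) := ⟨⟨0, hp⟩⟩
  obtain ⟨i, hi⟩ := exists_abs_le_sqrt_sum_sq_div_sqrt_card (A *ᵥ e)
  rw [Fintype.card_fin] at hi
  refine ⟨i, hi.trans ?_⟩
  gcongr
  -- The argument gives the factor `√K`; the claimed `K` is weaker since `K ≥ 1`.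
  calc √(∑ j, (A *ᵥ e) j ^ 2) ≤ √(K * ∑ t, e t ^ 2) := Real.sqrt_le_sqrt hAe
    _ = √K * √(∑ t, e t ^ 2) := Real.sqrt_mul (by positivity) _
    _ ≤ √(∑ t, e t ^ 2) * K := by
      rw [mul_comm]; gcongr; exact Real.sqrt_le_self_iff.mpr (Or.inr hK)
end

section
/- Co-support detection success: Let γ̂ = γ + e, let Λᶜ index rows of a matrix A (unit-norm rows, pairwise coherence ≤ μ_R) with aᵢᵀγ = 0 for i ∈ Λᶜ (|Λᶜ| = p remaining co-support rows), and let Λ index rows with |aᵢᵀγ| ≥ γ_min. If ‖e‖₂ ≤ γ_min · (1 + (1 + μ_R(p−1))/√p)⁻¹, then min over i ∈ Λᶜ of |aᵢᵀγ̂| < min over i ∈ Λ of |aᵢᵀγ̂|, so the row of minimal absolute correlation with γ̂ belongs to the co-support. -/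
/-! For `i ∈ Λᶜ` the correlation with `γ̂` is `⟪aᵢ, e⟫`, while for `j ∈ Λ` it is at least
`γ_min - |⟪aⱼ, e⟫| ≥ γ_min - ‖e‖`. By Gershgorin, the Gram matrix of the rows in `Λᶜ` has norm at
most `1 + μ(p - 1)`, so `∑_{i ∈ Λᶜ} ⟪aᵢ, e⟫² ≤ (1 + μ(p - 1)) ‖e‖²` and some `i ∈ Λᶜ` has
`|⟪aᵢ, e⟫| ≤ (1 + μ(p - 1)) / √p · ‖e‖`. The noise bound makes the two error terms add up to at
most `γ_min`. Strictness comes from the equality case of Cauchy–Schwarz: `|⟪aⱼ, e⟫| = ‖e‖` forces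
`e ∥ aⱼ`, and `aᵢ` is not parallel to `aⱼ` since `aᵢ ⊥ γ` but `aⱼ` is not, so `|⟪aᵢ, aⱼ⟫| < 1`. -/

open Finset RealInnerProductSpace WithLp

lemma lt_one_add_mul_sub_one_div_sqrt {x μ p : ℝ} (hx0 : 0 ≤ x) (hx1 : x < 1) (hxμ : x ≤ μ)
    (hp : 1 ≤ p) : x < (1 + μ * (p - 1)) / √p := by
  have hsqrt : √p ≤ p := by
    nlinarith [Real.sq_sqrt (zero_le_one.trans hp), Real.one_le_sqrt.mpr hp]
  rw [lt_div_iff₀ (by positivity)]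
  nlinarith

section Coherence

variable {ι E : Type*} [NormedAddCommGroup E] [InnerProductSpace ℝ E] {a : ι → E} {μ : ℝ}

theorem norm_sum_smul_sq_le_of_coherence (ha : ∀ i, ‖a i‖ = 1) (hμ : 0 ≤ μ)
    (hcoh : ∀ i j, i ≠ j → |⟪a i, a j⟫| ≤ μ) (s : Finset ι) (c : ι → ℝ) :
    ‖∑ i ∈ s, c i • a i‖ ^ 2 ≤ (1 + μ * (#s - 1)) * ∑ i ∈ s, c i ^ 2 := by
  classical
  -- Writing the diagonal term `c i ^ 2` as `(1 - μ) c i ^ 2 + μ |c i| ^ 2` lets the off-diagonal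
  -- bound `μ |c i| |c j|` run over all pairs, which sum to `μ (∑ |c i|) ^ 2`.
  have hterm : ∀ i j, c i * c j * ⟪a i, a j⟫ ≤
      (if i = j then (1 - μ) * c i ^ 2 else 0) + μ * (|c i| * |c j|) := by
    intro i j
    split_ifs with hij
    · subst hij
      rw [real_inner_self_eq_norm_sq, ha, abs_mul_abs_self]
      exact le_of_eq (by ring)
    · calc c i * c j * ⟪a i, a j⟫ ≤ |c i| * |c j| * |⟪a i, a j⟫| := by
            rw [← abs_mul, ← abs_mul]; exact le_abs_self _
        _ ≤ |c i| * |c j| * μ := by gcongr; exact hcoh i j hij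
        _ = 0 + μ * (|c i| * |c j|) := by ring
  calc ‖∑ i ∈ s, c i • a i‖ ^ 2 = ∑ i ∈ s, ∑ j ∈ s, c i * c j * ⟪a i, a j⟫ := by
        simp only [← real_inner_self_eq_norm_sq, sum_inner, inner_sum, real_inner_smul_left,
          real_inner_smul_right]
        exact sum_congr rfl fun i _ => sum_congr rfl fun j _ => by rw [real_inner_comm]; ring
    _ ≤ ∑ i ∈ s, ∑ j ∈ s, ((if i = j then (1 - μ) * c i ^ 2 else 0) + μ * (|c i| * |c j|)) :=
        sum_le_sum fun i _ => sum_le_sum fun j _ => hterm i j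
    _ = (1 - μ) * ∑ i ∈ s, c i ^ 2 + μ * (∑ i ∈ s, |c i|) ^ 2 := by
        rw [sq, sum_mul_sum, mul_sum, mul_sum, ← sum_add_distrib]
        refine sum_congr rfl fun i hi => ?_
        rw [sum_add_distrib, sum_ite_eq, if_pos hi, mul_sum]
    _ ≤ (1 - μ) * ∑ i ∈ s, c i ^ 2 + μ * (#s * ∑ i ∈ s, c i ^ 2) := by
        gcongr
        simpa only [sq_abs] using sq_sum_le_card_mul_sum_sq (s := s) (f := fun i => |c i|)
    _ = (1 + μ * (#s - 1)) * ∑ i ∈ s, c i ^ 2 := by ring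

theorem sum_sq_inner_le_of_coherence (ha : ∀ i, ‖a i‖ = 1) (hμ : 0 ≤ μ)
    (hcoh : ∀ i j, i ≠ j → |⟪a i, a j⟫| ≤ μ) {s : Finset ι} (hs : s.Nonempty) (x : E) :
    ∑ i ∈ s, ⟪a i, x⟫ ^ 2 ≤ (1 + μ * (#s - 1)) * ‖x‖ ^ 2 := by
  set Q := ∑ i ∈ s, ⟪a i, x⟫ ^ 2
  set w := ∑ i ∈ s, ⟪a i, x⟫ • a i
  have hQ : Q = ⟪w, x⟫ := by simp only [Q, w, sum_inner, real_inner_smul_left, sq]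
  have hw := norm_sum_smul_sq_le_of_coherence ha hμ hcoh s fun i => ⟪a i, x⟫
  have hcs : Q ≤ ‖w‖ * ‖x‖ := hQ ▸ real_inner_le_norm w x
  have hQ0 : 0 ≤ Q := sum_nonneg fun i _ => sq_nonneg _
  have hcard : (1 : ℝ) ≤ #s := by exact_mod_cast hs.card_pos
  have hC : 0 ≤ 1 + μ * (#s - 1) := by nlinarith
  have hQsq : Q * Q ≤ Q * ((1 + μ * (#s - 1)) * ‖x‖ ^ 2) := by
    calc Q * Q ≤ (‖w‖ * ‖x‖) ^ 2 := by nlinarith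
      _ = ‖w‖ ^ 2 * ‖x‖ ^ 2 := by ring
      _ ≤ (1 + μ * (#s - 1)) * Q * ‖x‖ ^ 2 := by gcongr
      _ = Q * ((1 + μ * (#s - 1)) * ‖x‖ ^ 2) := by ring
  rcases hQ0.eq_or_lt with hQz | hQpos
  · rw [← hQz]; positivity
  · exact le_of_mul_le_mul_left hQsq hQpos

theorem exists_mem_abs_inner_le_of_coherence (ha : ∀ i, ‖a i‖ = 1) (hμ : 0 ≤ μ)
    (hcoh : ∀ i j, i ≠ j → |⟪a i, a j⟫| ≤ μ) {s : Finset ι} (hs : s.Nonempty) (x : E) :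
    ∃ i ∈ s, |⟪a i, x⟫| ≤ (1 + μ * (#s - 1)) / √(#s : ℝ) * ‖x‖ := by
  obtain ⟨i, hi, hmin⟩ := s.exists_min_image (fun k => |⟪a k, x⟫|) hs
  refine ⟨i, hi, ?_⟩
  have hcard : (1 : ℝ) ≤ #s := by exact_mod_cast hs.card_pos
  have hC : 1 ≤ 1 + μ * (#s - 1) := by nlinarith
  have hsum : #s * ⟪a i, x⟫ ^ 2 ≤ ∑ k ∈ s, ⟪a k, x⟫ ^ 2 := by
    rw [← nsmul_eq_mul]
    exact card_nsmul_le_sum s _ _ fun k hk => by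
      simpa only [sq_abs] using pow_le_pow_left₀ (abs_nonneg _) (hmin k hk) 2
  have hsq : (√(#s : ℝ) * |⟪a i, x⟫|) ^ 2 ≤ ((1 + μ * (#s - 1)) * ‖x‖) ^ 2 := by
    calc (√(#s : ℝ) * |⟪a i, x⟫|) ^ 2 = #s * ⟪a i, x⟫ ^ 2 := by
          rw [mul_pow, sq_abs, Real.sq_sqrt (by positivity)]
      _ ≤ (1 + μ * (#s - 1)) * ‖x‖ ^ 2 := hsum.trans (sum_sq_inner_le_of_coherence ha hμ hcoh hs x)
      _ ≤ (1 + μ * (#s - 1)) * ((1 + μ * (#s - 1)) * ‖x‖ ^ 2) := by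
          apply le_mul_of_one_le_left (by positivity) hC
      _ = ((1 + μ * (#s - 1)) * ‖x‖) ^ 2 := by ring
  rw [div_mul_eq_mul_div, le_div_iff₀ (by positivity), mul_comm]
  exact (pow_le_pow_iff_left₀ (by positivity) (by positivity) two_ne_zero).mp hsq

end Coherence

section CauchySchwarzEquality

variable {E : Type*} [NormedAddCommGroup E] [InnerProductSpace ℝ E]

theorem abs_inner_eq_norm_mul_of_abs_inner_eq_norm {u x : E} (hu : ‖u‖ = 1)
    (h : |⟪u, x⟫| = ‖x‖) (v : E) : |⟪v, x⟫| = ‖x‖ * |⟪v, u⟫| := by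
  have hnorm : ‖⟪u, x⟫‖ = ‖u‖ * ‖x‖ := by rw [Real.norm_eq_abs, hu, one_mul, h]
  obtain hu0 | ⟨r, rfl⟩ := ((norm_inner_eq_norm_tfae ℝ u x).out 0 2).mp hnorm
  · simp [hu0] at hu
  · rw [real_inner_smul_right, abs_mul, ← h, real_inner_smul_right, real_inner_self_eq_norm_sq,
      hu, one_pow, mul_one]

theorem abs_inner_lt_one_of_inner_eq_zero {u w γ : E} (hu : ‖u‖ = 1) (hw : ‖w‖ = 1)
    (huγ : ⟪u, γ⟫ = 0) (hwγ : ⟪w, γ⟫ ≠ 0) : |⟪u, w⟫| < 1 := by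
  refine (abs_real_inner_le_norm u w).trans_eq (by rw [hu, hw, one_mul]) |>.lt_of_ne fun h => ?_
  have := abs_inner_eq_norm_mul_of_abs_inner_eq_norm hu (h.trans hw.symm) γ
  rw [real_inner_comm u γ, huγ, abs_zero, mul_zero, real_inner_comm w γ, abs_eq_zero] at this
  exact hwγ this

end CauchySchwarzEquality

theorem exists_mem_abs_inner_lt_of_coherence {ι E : Type*} [NormedAddCommGroup E]
    [InnerProductSpace ℝ E] {a : ι → E} {μ : ℝ} (ha : ∀ i, ‖a i‖ = 1) (hμ : 0 ≤ μ)
    (hcoh : ∀ i j, i ≠ j → |⟪a i, a j⟫| ≤ μ) {Λc Λ : Finset ι} (hΛc : Λc.Nonempty)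
    {γ e : E} {γmin : ℝ} (hγmin : 0 < γmin) (hzero : ∀ i ∈ Λc, ⟪a i, γ⟫ = 0)
    (hsupp : ∀ j ∈ Λ, γmin ≤ |⟪a j, γ⟫|)
    (hnoise : ‖e‖ ≤ γmin * (1 + (1 + μ * (#Λc - 1)) / √(#Λc : ℝ))⁻¹) :
    ∃ i ∈ Λc, ∀ j ∈ Λ, |⟪a i, γ + e⟫| < |⟪a j, γ + e⟫| := by
  obtain ⟨i, hi, hiB⟩ := exists_mem_abs_inner_le_of_coherence ha hμ hcoh hΛc e
  set B := (1 + μ * (#Λc - 1)) / √(#Λc : ℝ)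
  have hcard : (1 : ℝ) ≤ #Λc := by exact_mod_cast hΛc.card_pos
  have hB : 0 ≤ B := div_nonneg (by nlinarith) (Real.sqrt_nonneg _)
  have hnoise' : ‖e‖ * (1 + B) ≤ γmin := (le_mul_inv_iff₀ (by positivity)).mp hnoise
  refine ⟨i, hi, fun j hj => ?_⟩
  have hjγ : γmin ≤ |⟪a j, γ⟫| := hsupp j hj
  rw [inner_add_right, inner_add_right, hzero i hi, zero_add]
  suffices |⟪a i, e⟫| + |⟪a j, e⟫| < γmin by
    have := abs_add_le (⟪a j, γ⟫ + ⟪a j, e⟫) (-⟪a j, e⟫)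
    rw [add_neg_cancel_right, abs_neg] at this
    linarith
  have hje : |⟪a j, e⟫| ≤ ‖e‖ := by simpa [ha j] using abs_real_inner_le_norm (a j) e
  rcases hje.lt_or_eq with hlt | heq
  · linarith
  -- Equality in Cauchy–Schwarz: `e` is a multiple of `a j`, so `|⟪a i, e⟫| = ‖e‖ |⟪a i, a j⟫|`.
  have hie := abs_inner_eq_norm_mul_of_abs_inner_eq_norm (ha j) heq (a i)
  have hρ1 : |⟪a i, a j⟫| < 1 := abs_inner_lt_one_of_inner_eq_zero (ha i) (ha j) (hzero i hi)
    (abs_pos.mp (hγmin.trans_le hjγ))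
  have hij : i ≠ j := by
    rintro rfl
    rw [hzero i hi, abs_zero] at hjγ
    linarith
  have hρB : |⟪a i, a j⟫| < B := lt_one_add_mul_sub_one_div_sqrt (abs_nonneg _) hρ1
    (hcoh i j hij) hcard
  rcases (norm_nonneg e).eq_or_lt with he0 | hepos
  · rw [hie, heq, ← he0]; simpa using hγmin
  · rw [hie, heq]
    nlinarith

theorem EuclideanSpace.real_inner_toLp_toLp {ι : Type*} [Fintype ι] (x y : ι → ℝ) :
    ⟪toLp 2 x, toLp 2 y⟫ = ∑ t, x t * y t := by
  simp only [EuclideanSpace.inner_toLp_toLp, dotProduct, star_trivial, mul_comm]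

theorem EuclideanSpace.real_norm_toLp {ι : Type*} [Fintype ι] (x : ι → ℝ) :
    ‖toLp 2 x‖ = √(∑ t, x t ^ 2) := by
  rw [EuclideanSpace.norm_eq]
  simp only [Real.norm_eq_abs, sq_abs]

/-- Co-support detection success (Lemma 7.2): if the noise is small enough,
‖e‖₂ ≤ γ_min(1 + (1 + μ_R(p−1))/√p)⁻¹, then the row of minimal absolute
correlation with γ̂ = γ + e belongs to the co-support Λᶜ. -/
theorem stmt15 {N n : ℕ} (A : Matrix (Fin N) (Fin n) ℝ)
    (hrows : ∀ i, ∑ t, (A i t) ^ 2 = 1) (μR : ℝ) (hμR : 0 ≤ μR)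
    (hcoh : ∀ i j : Fin N, i ≠ j → |∑ t, A i t * A j t| ≤ μR)
    (Λc Λ : Finset (Fin N)) (p : ℕ) (hp : 0 < p) (hcard : Λc.card = p)
    (γ e γhat : Fin n → ℝ) (hhat : γhat = γ + e)
    (γmin : ℝ) (hγmin : 0 < γmin)
    (hzero : ∀ i ∈ Λc, A.mulVec γ i = 0)
    (hsupp : ∀ i ∈ Λ, γmin ≤ |A.mulVec γ i|)
    (hnoise : Real.sqrt (∑ t, (e t) ^ 2)
      ≤ γmin * (1 + (1 + μR * ((p : ℝ) - 1)) / Real.sqrt p)⁻¹) :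
    ∃ i ∈ Λc, ∀ j ∈ Λ, |A.mulVec γhat i| < |A.mulVec γhat j| := by
  subst hhat hcard
  have hinner (i : Fin N) (x : Fin n → ℝ) : ⟪toLp 2 (A i), toLp 2 x⟫ = A.mulVec x i :=
    EuclideanSpace.real_inner_toLp_toLp (A i) x
  have ha (i : Fin N) : ‖toLp 2 (A i)‖ = 1 := by
    rw [EuclideanSpace.real_norm_toLp, hrows, Real.sqrt_one]
  obtain ⟨i, hi, hlt⟩ := exists_mem_abs_inner_lt_of_coherence (γ := toLp 2 γ) (e := toLp 2 e)
    ha hμR (fun i j hij => EuclideanSpace.real_inner_toLp_toLp (A i) (A j) ▸ hcoh i j hij)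
    (card_pos.mp hp) hγmin (fun i hi => (hinner i γ).trans (hzero i hi))
    (fun j hj => (hinner j γ).symm ▸ hsupp j hj)
    ((EuclideanSpace.real_norm_toLp e).trans_le hnoise)
  refine ⟨i, hi, fun j hj => ?_⟩
  simpa only [← WithLp.toLp_add, hinner] using hlt j hj
end
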